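/- Scarf's theorem, case (i): if b > c, c+h > 0, μ > 0, σ > 0 and σ²/μ² > (b−c)/(h+c), then the unique minimizer over x ∈ ℝ of ψ(x) = sup_{Q ∈ M} E_Q[c·x + b·(D−x)₊ + h·(x−D)₊] is x = 0, with optimal value b·μ, where M is the set of probability measures on ℝ₊ with mean μ and second moment μ²+σ². -/

import Mathlib

open MeasureTheory Set

/-- Membership in the moment family: probability measures on ℝ₊ with mean μ
and second moment μ²+σ². -/
def inMomentFamily (μ σ : ℝ) (Q : MeasureTheory.Measure ℝ) : Prop :=
  MeasureTheory.IsProbabilityMeasure Q ∧ Q (Set.Ici (0:ℝ))ᶜ = 0 ∧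
    MeasureTheory.Integrable id Q ∧ MeasureTheory.Integrable (fun t => t ^ 2) Q ∧
    (∫ t, t ∂Q) = μ ∧ (∫ t, t ^ 2 ∂Q) = μ ^ 2 + σ ^ 2

/-- Scarf's worst-case cost ψ(x). -/
noncomputable def scarfPsi (c b h μ σ : ℝ) (x : ℝ) : ℝ :=
  sSup ((fun Q : MeasureTheory.Measure ℝ =>
    ∫ d, c * x + b * max (d - x) 0 + h * max (x - d) 0 ∂Q) ''
      {Q | inMomentFamily μ σ Q})

/-!
Since demand is nonnegative, ordering nothing costs `b·D`, whose expectation is `bμ` under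
every admissible law, so `ψ(0) = bμ`. For `x ≠ 0` a single law already beats `bμ`: the
two-point law with mass `p = μ²/(μ²+σ²)` at `a = (μ²+σ²)/μ` and the rest at `0`, which has
the prescribed moments. Its expected cost is piecewise linear in `x` with value `bμ` at `0`,
slope `c - b < 0` on `x < 0`, slope `(c+h) - p(b+h)` on `0 < x < a` and `c + h > 0` beyond
`a`; the variance condition is exactly the positivity of the middle slope.
-/

namespace Scarf

noncomputable section

/-- The newsvendor cost `Ψ(x, d)`. -/
def cost (c b h x d : ℝ) : ℝ := c * x + b * max (d - x) 0 + h * max (x - d) 0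

theorem scarfPsi_eq (c b h μ σ x : ℝ) :
    scarfPsi c b h μ σ x =
      sSup ((fun Q => ∫ d, cost c b h x d ∂Q) '' {Q | inMomentFamily μ σ Q}) :=
  rfl

theorem cost_le_cost_zero_add (c b h x d : ℝ) :
    cost c b h x d ≤ cost c b h 0 d + (|c| + |b| + |h|) * |x| := by
  have hb : |max (d - x) 0 - max (d - 0) 0| ≤ |x| := by
    simpa using abs_max_sub_max_le_abs (d - x) (d - 0) 0
  have hh : |max (x - d) 0 - max (0 - d) 0| ≤ |x| := by
    simpa using abs_max_sub_max_le_abs (x - d) (0 - d) 0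
  have hc : c * x ≤ |c| * |x| := by rw [← abs_mul]; exact le_abs_self _
  have hb' : b * (max (d - x) 0 - max (d - 0) 0) ≤ |b| * |x| := by
    calc _ ≤ |b * (max (d - x) 0 - max (d - 0) 0)| := le_abs_self _
      _ ≤ |b| * |x| := by rw [abs_mul]; gcongr
  have hh' : h * (max (x - d) 0 - max (0 - d) 0) ≤ |h| * |x| := by
    calc _ ≤ |h * (max (x - d) 0 - max (0 - d) 0)| := le_abs_self _
      _ ≤ |h| * |x| := by rw [abs_mul]; gcongr
  simp only [cost]
  linarith

def twoPoint (p a a' : ℝ) : Measure ℝ :=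
  ENNReal.ofReal p • Measure.dirac a + ENNReal.ofReal (1 - p) • Measure.dirac a'

theorem integrable_twoPoint (p a a' : ℝ) (f : ℝ → ℝ) : Integrable f (twoPoint p a a') :=
  ((integrable_dirac enorm_lt_top).smul_measure ENNReal.ofReal_ne_top).add_measure
    ((integrable_dirac enorm_lt_top).smul_measure ENNReal.ofReal_ne_top)

theorem integral_twoPoint {p : ℝ} (hp0 : 0 ≤ p) (hp1 : p ≤ 1) (a a' : ℝ) (f : ℝ → ℝ) :
    ∫ t, f t ∂twoPoint p a a' = p * f a + (1 - p) * f a' := by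
  rw [twoPoint, integral_add_measure
      ((integrable_dirac enorm_lt_top).smul_measure ENNReal.ofReal_ne_top)
      ((integrable_dirac enorm_lt_top).smul_measure ENNReal.ofReal_ne_top),
    integral_smul_measure, integral_smul_measure, integral_dirac, integral_dirac,
    ENNReal.toReal_ofReal hp0, ENNReal.toReal_ofReal (sub_nonneg.mpr hp1), smul_eq_mul,
    smul_eq_mul]

theorem isProbabilityMeasure_twoPoint {p : ℝ} (hp0 : 0 ≤ p) (hp1 : p ≤ 1) (a a' : ℝ) :
    IsProbabilityMeasure (twoPoint p a a') := by
  constructor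
  rw [twoPoint, Measure.add_apply, Measure.smul_apply, Measure.smul_apply, measure_univ,
    measure_univ, smul_eq_mul, smul_eq_mul, mul_one, mul_one,
    ← ENNReal.ofReal_add hp0 (sub_nonneg.mpr hp1), add_sub_cancel, ENNReal.ofReal_one]

theorem inMomentFamily_twoPoint {p a μ σ : ℝ} (hp0 : 0 ≤ p) (hp1 : p ≤ 1) (ha : 0 ≤ a)
    (hmean : p * a = μ) (hsecond : p * a ^ 2 = μ ^ 2 + σ ^ 2) :
    inMomentFamily μ σ (twoPoint p a 0) := by
  refine ⟨isProbabilityMeasure_twoPoint hp0 hp1 a 0, ?_, integrable_twoPoint p a 0 _,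
    integrable_twoPoint p a 0 _, ?_, ?_⟩
  · simp only [twoPoint, Measure.add_apply, Measure.smul_apply,
      Measure.dirac_apply' _ measurableSet_Ici.compl]
    rw [indicator_of_notMem (by simp [ha]), indicator_of_notMem (by simp)]
    simp
  · rw [integral_twoPoint hp0 hp1]
    simpa using hmean
  · rw [integral_twoPoint hp0 hp1]
    simpa using hsecond

variable {μ σ : ℝ} {Q : Measure ℝ}

theorem ae_nonneg_of_inMomentFamily (hQ : inMomentFamily μ σ Q) : ∀ᵐ d ∂Q, 0 ≤ d :=
  measure_mono_null (fun d hd => by simpa using hd) hQ.2.1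

theorem integrable_cost_of_inMomentFamily (hQ : inMomentFamily μ σ Q) (c b h x : ℝ) :
    Integrable (fun d => cost c b h x d) Q := by
  have := hQ.1
  have hid : Integrable (fun d : ℝ => d) Q := hQ.2.2.1
  exact ((integrable_const (c * x)).add
    (((hid.sub (integrable_const x)).pos_part).const_mul b)).add
    ((((integrable_const x).sub hid).pos_part).const_mul h)

theorem integral_cost_zero_of_inMomentFamily (hQ : inMomentFamily μ σ Q) (c b h : ℝ) :
    ∫ d, cost c b h 0 d ∂Q = b * μ := by
  have hcost : (fun d => cost c b h 0 d) =ᵐ[Q] fun d => b * d := by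
    filter_upwards [ae_nonneg_of_inMomentFamily hQ] with d hd
    simp [cost, hd]
  rw [integral_congr_ae hcost, integral_const_mul, hQ.2.2.2.2.1]

theorem integral_cost_le_of_inMomentFamily (hQ : inMomentFamily μ σ Q) (c b h x : ℝ) :
    ∫ d, cost c b h x d ∂Q ≤ b * μ + (|c| + |b| + |h|) * |x| := by
  have := hQ.1
  calc ∫ d, cost c b h x d ∂Q ≤ ∫ d, cost c b h 0 d + (|c| + |b| + |h|) * |x| ∂Q :=
        integral_mono (integrable_cost_of_inMomentFamily hQ c b h x)
          ((integrable_cost_of_inMomentFamily hQ c b h 0).add (integrable_const _))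
          (fun d => cost_le_cost_zero_add c b h x d)
    _ = b * μ + (|c| + |b| + |h|) * |x| := by
        rw [integral_add (integrable_cost_of_inMomentFamily hQ c b h 0) (integrable_const _),
          integral_cost_zero_of_inMomentFamily hQ, integral_const, probReal_univ, one_smul]

theorem integral_cost_le_scarfPsi (hQ : inMomentFamily μ σ Q) (c b h x : ℝ) :
    ∫ d, cost c b h x d ∂Q ≤ scarfPsi c b h μ σ x := by
  refine le_csSup ⟨b * μ + (|c| + |b| + |h|) * |x|, ?_⟩ (mem_image_of_mem _ hQ)
  rintro _ ⟨Q', hQ', rfl⟩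
  exact integral_cost_le_of_inMomentFamily hQ' c b h x

theorem scarfPsi_zero (hQ : inMomentFamily μ σ Q) (c b h : ℝ) :
    scarfPsi c b h μ σ 0 = b * μ := by
  have himage : (fun Q => ∫ d, cost c b h 0 d ∂Q) '' {Q | inMomentFamily μ σ Q}
      = (fun _ => b * μ) '' {Q | inMomentFamily μ σ Q} :=
    image_congr fun _ hQ' => integral_cost_zero_of_inMomentFamily hQ' c b h
  rw [scarfPsi_eq, himage, Nonempty.image_const ⟨Q, hQ⟩, csSup_singleton]

theorem lt_twoPoint_expected_cost {b c h p a x : ℝ} (hbc : c < b) (hch : 0 < c + h)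
    (ha : 0 < a) (hmean : p * a = μ) (hslope : p * (b + h) < c + h)
    (hx : x ≠ 0) :
    b * μ < p * cost c b h x a + (1 - p) * cost c b h x 0 := by
  subst hmean
  simp only [cost]
  rcases hx.lt_or_gt with hx0 | hx0
  · rw [max_eq_left (by linarith : 0 ≤ a - x), max_eq_right (by linarith : x - a ≤ 0),
      max_eq_left (by linarith : 0 ≤ 0 - x), max_eq_right (by linarith : x - 0 ≤ 0)]
    nlinarith
  rcases le_or_gt x a with hxa | hxa
  · rw [max_eq_left (by linarith : 0 ≤ a - x), max_eq_right (by linarith : x - a ≤ 0),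
      max_eq_right (by linarith : 0 - x ≤ 0), max_eq_left (by linarith : 0 ≤ x - 0)]
    nlinarith
  · rw [max_eq_right (by linarith : a - x ≤ 0), max_eq_left (by linarith : 0 ≤ x - a),
      max_eq_right (by linarith : 0 - x ≤ 0), max_eq_left (by linarith : 0 ≤ x - 0)]
    nlinarith [mul_lt_mul_of_pos_left hxa hch, mul_lt_mul_of_pos_right hslope ha]

end

end Scarf

open Scarf in
theorem scarf_case_i_general (b c h μ σ : ℝ) (hbc : c < b) (hch : 0 < c + h)
    (hμ : 0 < μ) (hvar : σ ^ 2 / μ ^ 2 > (b - c) / (h + c)) :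
    scarfPsi c b h μ σ 0 = b * μ ∧
    ∀ x : ℝ, x ≠ 0 → scarfPsi c b h μ σ 0 < scarfPsi c b h μ σ x := by
  set p := μ ^ 2 / (μ ^ 2 + σ ^ 2) with hp
  set a := (μ ^ 2 + σ ^ 2) / μ with ha
  have hp0 : 0 ≤ p := by positivity
  have hp1 : p ≤ 1 := div_le_one_of_le₀ (by nlinarith) (by positivity)
  have hmean : p * a = μ := by rw [hp, ha]; field_simp
  have hsecond : p * a ^ 2 = μ ^ 2 + σ ^ 2 := by rw [hp, ha]; field_simp
  have hslope : p * (b + h) < c + h := by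
    rw [gt_iff_lt, div_lt_div_iff₀ (by linarith) (by positivity)] at hvar
    rw [div_mul_eq_mul_div, div_lt_iff₀ (by positivity)]
    nlinarith
  have hQ := inMomentFamily_twoPoint hp0 hp1 (by positivity) hmean hsecond
  refine ⟨scarfPsi_zero hQ c b h, fun x hx => ?_⟩
  calc scarfPsi c b h μ σ 0 = b * μ := scarfPsi_zero hQ c b h
    _ < p * cost c b h x a + (1 - p) * cost c b h x 0 :=
        lt_twoPoint_expected_cost hbc hch (by positivity) hmean hslope hx
    _ = ∫ d, cost c b h x d ∂twoPoint p a 0 := (integral_twoPoint hp0 hp1 a 0 _).symm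
    _ ≤ scarfPsi c b h μ σ x := integral_cost_le_scarfPsi hQ c b h x

/-- Scarf's theorem, case (i): if σ²/μ² > (b−c)/(h+c) then x = 0 is the unique
minimizer of ψ over ℝ, with optimal value bμ. -/
theorem scarf_case_i (b c h μ σ : ℝ) (hbc : c < b) (hch : 0 < c + h)
    (hμ : 0 < μ) (hσ : 0 < σ) (hvar : σ ^ 2 / μ ^ 2 > (b - c) / (h + c)) :
    scarfPsi c b h μ σ 0 = b * μ ∧
    ∀ x : ℝ, x ≠ 0 → scarfPsi c b h μ σ 0 < scarfPsi c b h μ σ x :=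
  scarf_case_i_general b c h μ σ hbc hch hμ hvar
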